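/- arXiv:1312.0026 — 3 statements merged into one kernel-verified Lean document; each statement's English description precedes it below -/
import Mathlib

section
/- Let H be an object of an abelian category, ρ : H → Q and β : K → H and θ : H → T morphisms such that (1) θ ∘ β = 0, (2) the image of ρ ∘ β equals the image of ρ, and (3) the restriction of θ to ker ρ is a monomorphism. Then H decomposes as the internal direct sum of ker ρ and the image of β, i.e., H ≅ ker ρ ⊕ Im β. -/
open CategoryTheory CategoryTheory.Limits

/-- If `θ ∘ β = 0`, the image of `ρ ∘ β` equals the image of `ρ`, and `θ` is mono on
`ker ρ`, then `H` is the internal direct sum of `ker ρ` and `Im β`: the canonical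
morphism `ker ρ ⊞ image β ⟶ H` is an isomorphism. -/
theorem splitting_of_perverse_cohomology {𝒜 : Type*} [Category 𝒜] [Abelian 𝒜]
    {H Q K T : 𝒜} (ρ : H ⟶ Q) (β : K ⟶ H) (θ : H ⟶ T)
    (h1 : β ≫ θ = 0)
    (h2 : imageSubobject (β ≫ ρ) = imageSubobject ρ)
    (h3 : Mono (kernel.ι ρ ≫ θ)) :
    IsIso (biprod.desc (kernel.ι ρ) (image.ι β)) := by
  -- θ kills the image of β
  have hιθ : image.ι β ≫ θ = 0 := by
    rw [← cancel_epi (factorThruImage β), image.fac_assoc, h1, comp_zero]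
  -- the canonical map is mono
  have hmono : Mono (biprod.desc (kernel.ι ρ) (image.ι β)) := by
    apply Preadditive.mono_of_cancel_zero
    intro X a ha
    have hdesc : biprod.desc (kernel.ι ρ) (image.ι β)
        = biprod.fst ≫ kernel.ι ρ + biprod.snd ≫ image.ι β := by
      ext <;> simp
    have haθ : (a ≫ biprod.fst) ≫ (kernel.ι ρ ≫ θ) = 0 := by
      have := congrArg (fun x => x ≫ θ) ha
      simpa [hdesc, Preadditive.add_comp, hιθ] using this
    have ha1 : a ≫ biprod.fst = 0 := by
      rwa [← cancel_mono (kernel.ι ρ ≫ θ), zero_comp]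
    have ha2 : (a ≫ biprod.snd) ≫ image.ι β = 0 := by
      have := ha
      rw [hdesc, Preadditive.comp_add, ← Category.assoc, ← Category.assoc, ha1,
        zero_comp, zero_add] at this
      exact this
    have ha2' : a ≫ biprod.snd = 0 := by
      rwa [← cancel_mono (image.ι β), zero_comp]
    apply biprod.hom_ext <;> simp [ha1, ha2']
  -- β ≫ factorThruImage ρ is epi
  have hw : ∃ w : image (β ≫ ρ) ⟶ image ρ,
      w ≫ image.ι ρ = image.ι (β ≫ ρ) ∧ Epi w := by
    refine ⟨Subobject.ofMkLEMk _ _ h2.le, Subobject.ofMkLEMk_comp h2.le, ?_⟩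
    have hsec : Subobject.ofMkLEMk _ _ h2.ge ≫ Subobject.ofMkLEMk _ _ h2.le = 𝟙 _ := by
      rw [← cancel_mono (image.ι ρ)]
      simp [Subobject.ofMkLEMk_comp]
    exact epi_of_epi_fac hsec
  obtain ⟨w, hw1, hw2⟩ := hw
  have hβfac : β ≫ factorThruImage ρ = factorThruImage (β ≫ ρ) ≫ w := by
    rw [← cancel_mono (image.ι ρ)]
    simp [hw1]
  have hβepi : Epi (β ≫ factorThruImage ρ) := by
    rw [hβfac]; exact epi_comp _ _
  -- the canonical map is epi
  have hepi : Epi (biprod.desc (kernel.ι ρ) (image.ι β)) := by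
    apply Preadditive.epi_of_cancel_zero
    intro X g hg
    have hker : kernel.ι ρ ≫ g = 0 := by
      have := congrArg (fun x => biprod.inl ≫ x) hg
      simpa using this
    have him : image.ι β ≫ g = 0 := by
      have := congrArg (fun x => biprod.inr ≫ x) hg
      simpa using this
    -- g factors through factorThruImage ρ
    have hker' : kernel.ι (factorThruImage ρ) ≫ g = 0 := by
      have hcond : kernel.ι (factorThruImage ρ) ≫ ρ = 0 := by
        calc kernel.ι (factorThruImage ρ) ≫ ρ
            = kernel.ι (factorThruImage ρ) ≫ factorThruImage ρ ≫ image.ι ρ := by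
              rw [image.fac]
          _ = 0 := by rw [kernel.condition_assoc, zero_comp]
      have hfac : kernel.ι (factorThruImage ρ)
          = kernel.lift ρ (kernel.ι (factorThruImage ρ)) hcond ≫ kernel.ι ρ := by simp
      rw [hfac, Category.assoc, hker, comp_zero]
    have hu := Abelian.comp_epiDesc (factorThruImage ρ) g hker'
    set u := Abelian.epiDesc (factorThruImage ρ) g hker' with hu_def
    have hβg : β ≫ g = 0 := by
      rw [← image.fac β, Category.assoc, him, comp_zero]
    have hu0 : u = 0 := by
      rw [← cancel_epi (β ≫ factorThruImage ρ), comp_zero, Category.assoc, hu, hβg]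
    rw [← hu, hu0, comp_zero]
  exact isIso_of_mono_of_epi _
end

section
/- Let δ : E → F be a morphism of finite-dimensional filtered vector spaces that is strictly compatible with the filtrations, and let E' ⊆ E be a filtered subspace such that the quotient E/E' has weights < n (i.e., W_{n-1}(E/E') = E/E') while F has weights ≥ n (i.e., W_{n-1} F = 0). Then δ(E') = δ(E). -/
/-- If `δ : E → F` is strict, the quotient `E/E'` (with the image filtration)
has weights < n, and `F` has weights ≥ n, then `δ(E') = δ(E)`. -/
theorem image_of_sub_eq_image_of_strict
    {K : Type*} [Field K] {E F : Type*}
    [AddCommGroup E] [Module K E] [AddCommGroup F] [Module K F]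
    [FiniteDimensional K E] [FiniteDimensional K F]
    (WE : ℤ → Submodule K E) (WF : ℤ → Submodule K F)
    (hWE : Monotone WE) (hWF : Monotone WF)
    (δ : E →ₗ[K] F)
    (hstrict : ∀ k : ℤ, Submodule.map δ (WE k) = LinearMap.range δ ⊓ WF k)
    (E' : Submodule K E) (n : ℤ)
    (hquot : Submodule.map E'.mkQ (WE (n - 1)) = ⊤)
    (hF : WF (n - 1) = ⊥) :
    Submodule.map δ E' = LinearMap.range δ := by
  have hsup : E' ⊔ WE (n - 1) = ⊤ := by
    rw [← Submodule.comap_map_mkQ, hquot, Submodule.comap_top]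
  have hW : Submodule.map δ (WE (n - 1)) = ⊥ := by
    rw [hstrict, hF, inf_bot_eq]
  calc Submodule.map δ E' = Submodule.map δ E' ⊔ Submodule.map δ (WE (n - 1)) := by
        rw [hW, sup_bot_eq]
    _ = Submodule.map δ (E' ⊔ WE (n - 1)) := (Submodule.map_sup _ _ _).symm
    _ = Submodule.map δ ⊤ := by rw [hsup]
    _ = LinearMap.range δ := Submodule.map_top δ
end

section
/- Let (V_k)_{k ∈ ℤ} be finite-dimensional vector spaces with linear maps e : V_k → V_{k+2} such that e^i : V_{-i} → V_i is an isomorphism for all i ≥ 0. Fix i ≥ 1. Then the map e^i restricts to an isomorphism from the subspace e(V_{-i-1}) ⊆ V_{-i+1} onto the subspace e(V_{i-1}) ⊆ V_{i+1}. (Here e^i : V_{-i+1} → V_{i+1}.) -/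
/-- Under hard Lefschetz, for `i ≥ 1` the map `e^i : V_{-i+1} → V_{i+1}` restricts to
an isomorphism from the subspace `e(V_{-i-1}) ⊆ V_{-i+1}` onto `e(V_{i-1}) ⊆ V_{i+1}`. -/
theorem hard_lefschetz_iso_on_images
    {K : Type*} [Field K] {M : Type*} [AddCommGroup M] [Module K M]
    [FiniteDimensional K M]
    (V : ℤ → Submodule K M) (e : Module.End K M)
    (hdeg : ∀ k : ℤ, Submodule.map e (V k) ≤ V (k + 2))
    (hHL : ∀ i : ℕ, Submodule.map (e ^ i) (V (-(i : ℤ))) = V (i : ℤ) ∧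
      ∀ x ∈ V (-(i : ℤ)), (e ^ i) x = 0 → x = 0)
    (i : ℕ) (hi : 1 ≤ i) :
    Submodule.map (e ^ i) (Submodule.map e (V (-(i : ℤ) - 1)))
      = Submodule.map e (V ((i : ℤ) - 1)) ∧
    ∀ x ∈ Submodule.map e (V (-(i : ℤ) - 1)), (e ^ i) x = 0 → x = 0 := by
  -- iterated degree bound
  have hiter : ∀ n : ℕ, ∀ k : ℤ, Submodule.map (e ^ n) (V k) ≤ V (k + 2 * n) := by
    intro n
    induction n with
    | zero => intro k; simp [Module.End.one_eq_id]
    | succ n ih =>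
      intro k
      have hcomp : Submodule.map (e ^ (n + 1)) (V k)
          = Submodule.map (e ^ n) (Submodule.map e (V k)) := by
        rw [pow_succ, Module.End.mul_eq_comp, Submodule.map_comp]
      rw [hcomp]
      calc Submodule.map (e ^ n) (Submodule.map e (V k))
          ≤ Submodule.map (e ^ n) (V (k + 2)) := Submodule.map_mono (hdeg k)
        _ ≤ V (k + 2 + 2 * n) := ih (k + 2)
        _ = V (k + 2 * (n + 1)) := by ring_nf
  have hcast : -(i : ℤ) - 1 = -((i + 1 : ℕ) : ℤ) := by push_cast; ring
  obtain ⟨hsurj, hinj⟩ := hHL (i + 1)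
  -- e^{i+1} = e^i ∘ e
  have hpow : (e ^ (i + 1)) = (e ^ i) ∘ₗ e := by
    rw [pow_succ, Module.End.mul_eq_comp]
  constructor
  · -- both sides equal V (i+1)
    have h1 : Submodule.map (e ^ i) (Submodule.map e (V (-(i : ℤ) - 1)))
        = V ((i + 1 : ℕ) : ℤ) := by
      rw [← Submodule.map_comp, ← hpow, hcast, hsurj]
    rw [h1]
    apply le_antisymm
    · -- V (i+1) ≤ e (V (i-1))
      intro y hy
      rw [← hsurj] at hy
      obtain ⟨x, hx, rfl⟩ := hy
      rw [← hcast] at hx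
      refine ⟨(e ^ i) x, ?_, by rw [pow_succ']; rfl⟩
      have h2 := hiter i (-(i : ℤ) - 1) ⟨x, hx, rfl⟩
      have heq : -(i : ℤ) - 1 + 2 * (i : ℤ) = (i : ℤ) - 1 := by ring
      rwa [heq] at h2
    · -- e (V (i-1)) ≤ V (i+1)
      intro y hy
      obtain ⟨x, hx, rfl⟩ := hy
      have h2 := hdeg ((i : ℤ) - 1) ⟨x, hx, rfl⟩
      have heq : (i : ℤ) - 1 + 2 = ((i + 1 : ℕ) : ℤ) := by push_cast; ring
      rwa [heq] at h2
  · intro x hx hx0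
    obtain ⟨y, hy, rfl⟩ := hx
    have hy' : y ∈ V (-((i + 1 : ℕ) : ℤ)) := by rwa [← hcast]
    have : (e ^ (i + 1)) y = 0 := by rw [hpow]; exact hx0
    rw [hinj y hy' this]
    simp
end
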